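/- arXiv:1503.06305 — 3 statements merged into one kernel-verified Lean document; each statement's English description precedes it below -/
import Mathlib

section
/- Let μ₁, μ₂ be real constants, U ⊆ ℂ an open set, and x⁰, x¹, x² : U → ℝ smooth functions. Define ψ⁰ = e^{−μ₁x²}·x⁰_z, ψ¹ = e^{−μ₂x²}·x¹_z, ψ² = x²_z (complex-valued functions on U). Then the three equations x⁰_{zz̄} − μ₁(x⁰_z̄·x²_z + x⁰_z·x²_z̄) = 0, x¹_{zz̄} − μ₂(x¹_z̄·x²_z + x¹_z·x²_z̄) = 0, and x²_{zz̄} − μ₁·x⁰_z·x⁰_z̄·e^{−2μ₁x²} + μ₂·x¹_z·x¹_z̄·e^{−2μ₂x²} = 0 hold on U if and only if ψ⁰, ψ¹, ψ² satisfy the system (HME): ψ⁰_z̄ = μ₁·conj(ψ⁰)·ψ², ψ¹_z̄ = μ₂·conj(ψ¹)·ψ², ψ²_z̄ = μ₁|ψ⁰|² − μ₂|ψ¹|² on U. -/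
open Complex

/-- The Wirtinger derivative `φ_z = (φ_u − i·φ_v)/2`. -/
noncomputable def wirtZ (φ : ℂ → ℂ) (z : ℂ) : ℂ :=
  (fderiv ℝ φ z 1 - Complex.I * fderiv ℝ φ z Complex.I) / 2

/-- The conjugate Wirtinger derivative `φ_z̄ = (φ_u + i·φ_v)/2`. -/
noncomputable def wirtZBar (φ : ℂ → ℂ) (z : ℂ) : ℂ :=
  (fderiv ℝ φ z 1 + Complex.I * fderiv ℝ φ z Complex.I) / 2

lemma fderiv_ofReal_comp (x : ℂ → ℝ) {z : ℂ} (hx : DifferentiableAt ℝ x z) (v : ℂ) :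
    fderiv ℝ (fun w => (x w : ℂ)) z v = (fderiv ℝ x z v : ℂ) := by
  have h : fderiv ℝ (fun w => (x w : ℂ)) z = Complex.ofRealCLM.comp (fderiv ℝ x z) :=
    (Complex.ofRealCLM.hasFDerivAt.comp z hx.hasFDerivAt).fderiv
  simp [h]

lemma wirtZBar_eq_conj_wirtZ (x : ℂ → ℝ) {z : ℂ} (hx : DifferentiableAt ℝ x z) :
    wirtZBar (fun w => (x w : ℂ)) z = (starRingEnd ℂ) (wirtZ (fun w => (x w : ℂ)) z) := by
  simp only [wirtZ, wirtZBar, fderiv_ofReal_comp x hx, map_div₀, map_sub, map_mul,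
    Complex.conj_ofReal, Complex.conj_I, map_ofNat]
  ring

lemma wirtZBar_mul (f g : ℂ → ℂ) {z : ℂ} (hf : DifferentiableAt ℝ f z)
    (hg : DifferentiableAt ℝ g z) :
    wirtZBar (fun w => f w * g w) z = wirtZBar f z * g z + f z * wirtZBar g z := by
  simp only [wirtZBar, fderiv_fun_mul hf hg, ContinuousLinearMap.add_apply,
    ContinuousLinearMap.smul_apply, smul_eq_mul]
  ring

lemma exp_hasFDerivAt (μ : ℝ) (x : ℂ → ℝ) {z : ℂ} (hx : DifferentiableAt ℝ x z) :
    HasFDerivAt (fun w => Real.exp (-(μ * x w)))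
      (Real.exp (-(μ * x z)) • (-(μ • fderiv ℝ x z))) z := by
  exact (Real.hasDerivAt_exp _).comp_hasFDerivAt z ((hx.hasFDerivAt.const_mul μ).neg)

lemma wirtZBar_exp (μ : ℝ) (x : ℂ → ℝ) {z : ℂ} (hx : DifferentiableAt ℝ x z) :
    wirtZBar (fun w => ((Real.exp (-(μ * x w)) : ℝ) : ℂ)) z
      = -(μ : ℂ) * Real.exp (-(μ * x z)) * wirtZBar (fun w => (x w : ℂ)) z := by
  have hd : DifferentiableAt ℝ (fun w => Real.exp (-(μ * x w))) z :=
    (exp_hasFDerivAt μ x hx).differentiableAt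
  have hf : fderiv ℝ (fun w => Real.exp (-(μ * x w))) z
      = Real.exp (-(μ * x z)) • (-(μ • fderiv ℝ x z)) := (exp_hasFDerivAt μ x hx).fderiv
  simp only [wirtZBar, fderiv_ofReal_comp _ hd, fderiv_ofReal_comp _ hx, hf,
    ContinuousLinearMap.smul_apply, ContinuousLinearMap.neg_apply, smul_eq_mul]
  push_cast
  ring

lemma diff_wirtZ (x : ℂ → ℝ) {U : Set ℂ} (hU : IsOpen U) (hx : ContDiffOn ℝ (⊤ : ℕ∞) x U)
    {z : ℂ} (hz : z ∈ U) : DifferentiableAt ℝ (wirtZ (fun w => (x w : ℂ))) z := by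
  have hX : ContDiffAt ℝ (⊤ : ℕ∞) (fun w => (x w : ℂ)) z :=
    Complex.ofRealCLM.contDiff.contDiffAt.comp z (hx.contDiffAt (hU.mem_nhds hz))
  have hfd : ContDiffAt ℝ 1 (fderiv ℝ (fun w => (x w : ℂ))) z :=
    hX.fderiv_right (WithTop.coe_le_coe.mpr le_top)
  have h := hfd.differentiableAt one_ne_zero
  have hsub : DifferentiableAt ℝ (fun w =>
      fderiv ℝ (fun w => (x w : ℂ)) w 1
        - Complex.I * fderiv ℝ (fun w => (x w : ℂ)) w Complex.I) z :=
    (h.clm_apply (differentiableAt_const 1)).sub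
      ((h.clm_apply (differentiableAt_const Complex.I)).const_mul Complex.I)
  exact hsub.mul_const _

lemma habs_sq (w : ℂ) : ((‖w‖ : ℝ) : ℂ) ^ 2 = w * (starRingEnd ℂ) w := by
  rw [← Complex.ofReal_pow, Complex.sq_norm, Complex.mul_conj]

/-- The harmonic map equations for `(x⁰,x¹,x²) : U → G(μ₁,μ₂)` are equivalent to the
first-order system (HME) for `ψ⁰ = e^{−μ₁x²}x⁰_z`, `ψ¹ = e^{−μ₂x²}x¹_z`, `ψ² = x²_z`. -/
theorem harmonic_iff_HME (μ₁ μ₂ : ℝ) (U : Set ℂ) (hU : IsOpen U)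
    (x0 x1 x2 : ℂ → ℝ)
    (h0 : ContDiffOn ℝ (⊤ : ℕ∞) x0 U) (h1 : ContDiffOn ℝ (⊤ : ℕ∞) x1 U) (h2 : ContDiffOn ℝ (⊤ : ℕ∞) x2 U) :
    let X0 : ℂ → ℂ := fun z => (x0 z : ℂ)
    let X1 : ℂ → ℂ := fun z => (x1 z : ℂ)
    let X2 : ℂ → ℂ := fun z => (x2 z : ℂ)
    let ψ0 : ℂ → ℂ := fun z => (Real.exp (-(μ₁ * x2 z)) : ℂ) * wirtZ X0 z
    let ψ1 : ℂ → ℂ := fun z => (Real.exp (-(μ₂ * x2 z)) : ℂ) * wirtZ X1 z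
    let ψ2 : ℂ → ℂ := fun z => wirtZ X2 z
    ((∀ z ∈ U,
        wirtZBar (wirtZ X0) z
          - (μ₁ : ℂ) * (wirtZBar X0 z * wirtZ X2 z + wirtZ X0 z * wirtZBar X2 z) = 0 ∧
        wirtZBar (wirtZ X1) z
          - (μ₂ : ℂ) * (wirtZBar X1 z * wirtZ X2 z + wirtZ X1 z * wirtZBar X2 z) = 0 ∧
        wirtZBar (wirtZ X2) z
          - (μ₁ : ℂ) * wirtZ X0 z * wirtZBar X0 z * (Real.exp (-(2 * μ₁ * x2 z)) : ℂ)
          + (μ₂ : ℂ) * wirtZ X1 z * wirtZBar X1 z * (Real.exp (-(2 * μ₂ * x2 z)) : ℂ) = 0)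
      ↔
      (∀ z ∈ U,
        wirtZBar ψ0 z = (μ₁ : ℂ) * (starRingEnd ℂ) (ψ0 z) * ψ2 z ∧
        wirtZBar ψ1 z = (μ₂ : ℂ) * (starRingEnd ℂ) (ψ1 z) * ψ2 z ∧
        wirtZBar ψ2 z =
          (μ₁ : ℂ) * ((‖ψ0 z‖ : ℝ) : ℂ) ^ 2 - (μ₂ : ℂ) * ((‖ψ1 z‖ : ℝ) : ℂ) ^ 2)) := by
  intro X0 X1 X2 ψ0 ψ1 ψ2
  refine forall₂_congr fun z hz => ?_
  have d0 : DifferentiableAt ℝ x0 z := (h0.contDiffAt (hU.mem_nhds hz)).differentiableAt (by simp)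
  have d1 : DifferentiableAt ℝ x1 z := (h1.contDiffAt (hU.mem_nhds hz)).differentiableAt (by simp)
  have d2 : DifferentiableAt ℝ x2 z := (h2.contDiffAt (hU.mem_nhds hz)).differentiableAt (by simp)
  have c0 : wirtZBar X0 z = (starRingEnd ℂ) (wirtZ X0 z) := wirtZBar_eq_conj_wirtZ x0 d0
  have c1 : wirtZBar X1 z = (starRingEnd ℂ) (wirtZ X1 z) := wirtZBar_eq_conj_wirtZ x1 d1
  have c2 : wirtZBar X2 z = (starRingEnd ℂ) (wirtZ X2 z) := wirtZBar_eq_conj_wirtZ x2 d2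
  have hw0 : DifferentiableAt ℝ (wirtZ X0) z := diff_wirtZ x0 hU h0 hz
  have hw1 : DifferentiableAt ℝ (wirtZ X1) z := diff_wirtZ x1 hU h1 hz
  have hdE0 : DifferentiableAt ℝ (fun w => ((Real.exp (-(μ₁ * x2 w)) : ℝ) : ℂ)) z :=
    Complex.ofRealCLM.differentiableAt.comp z (exp_hasFDerivAt μ₁ x2 d2).differentiableAt
  have hdE1 : DifferentiableAt ℝ (fun w => ((Real.exp (-(μ₂ * x2 w)) : ℝ) : ℂ)) z :=
    Complex.ofRealCLM.differentiableAt.comp z (exp_hasFDerivAt μ₂ x2 d2).differentiableAt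
  have hE0 : (Real.exp (-(μ₁ * x2 z)) : ℂ) ≠ 0 :=
    Complex.ofReal_ne_zero.mpr (Real.exp_ne_zero _)
  have hE1 : (Real.exp (-(μ₂ * x2 z)) : ℂ) ≠ 0 :=
    Complex.ofReal_ne_zero.mpr (Real.exp_ne_zero _)
  have e0 : wirtZBar ψ0 z
      = wirtZBar (fun w => ((Real.exp (-(μ₁ * x2 w)) : ℝ) : ℂ)) z * wirtZ X0 z
        + (Real.exp (-(μ₁ * x2 z)) : ℂ) * wirtZBar (wirtZ X0) z :=
    wirtZBar_mul _ _ hdE0 hw0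
  have e1 : wirtZBar ψ1 z
      = wirtZBar (fun w => ((Real.exp (-(μ₂ * x2 w)) : ℝ) : ℂ)) z * wirtZ X1 z
        + (Real.exp (-(μ₂ * x2 z)) : ℂ) * wirtZBar (wirtZ X1) z :=
    wirtZBar_mul _ _ hdE1 hw1
  rw [wirtZBar_exp μ₁ x2 d2, c2] at e0
  rw [wirtZBar_exp μ₂ x2 d2, c2] at e1
  have conj0 : (starRingEnd ℂ) (ψ0 z)
      = (Real.exp (-(μ₁ * x2 z)) : ℂ) * (starRingEnd ℂ) (wirtZ X0 z) := by
    simp only [ψ0, map_mul, Complex.conj_ofReal]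
  have conj1 : (starRingEnd ℂ) (ψ1 z)
      = (Real.exp (-(μ₂ * x2 z)) : ℂ) * (starRingEnd ℂ) (wirtZ X1 z) := by
    simp only [ψ1, map_mul, Complex.conj_ofReal]
  have habs0 : ((‖ψ0 z‖ : ℝ) : ℂ) ^ 2
      = (Real.exp (-(μ₁ * x2 z)) : ℂ) ^ 2 * (wirtZ X0 z * (starRingEnd ℂ) (wirtZ X0 z)) := by
    rw [habs_sq]; simp only [ψ0, map_mul, Complex.conj_ofReal]; ring
  have habs1 : ((‖ψ1 z‖ : ℝ) : ℂ) ^ 2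
      = (Real.exp (-(μ₂ * x2 z)) : ℂ) ^ 2 * (wirtZ X1 z * (starRingEnd ℂ) (wirtZ X1 z)) := by
    rw [habs_sq]; simp only [ψ1, map_mul, Complex.conj_ofReal]; ring
  have hex0 : ((Real.exp (-(2 * μ₁ * x2 z)) : ℝ) : ℂ)
      = (Real.exp (-(μ₁ * x2 z)) : ℂ) ^ 2 := by
    rw [← Complex.ofReal_pow, sq, ← Real.exp_add]; ring_nf
  have hex1 : ((Real.exp (-(2 * μ₂ * x2 z)) : ℝ) : ℂ)
      = (Real.exp (-(μ₂ * x2 z)) : ℂ) ^ 2 := by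
    rw [← Complex.ofReal_pow, sq, ← Real.exp_add]; ring_nf
  have hψ2 : ∀ w, ψ2 w = wirtZ X2 w := fun _ => rfl
  have hψ2' : wirtZBar ψ2 z = wirtZBar (wirtZ X2) z := rfl
  refine and_congr ?_ (and_congr ?_ ?_)
  · constructor
    · intro h
      rw [c0, c2] at h
      rw [e0, conj0, hψ2 z]
      linear_combination (Real.exp (-(μ₁ * x2 z)) : ℂ) * h
    · intro h
      rw [e0, conj0, hψ2 z] at h
      rw [c0, c2]
      refine mul_left_cancel₀ hE0 ?_
      linear_combination h
  · constructor
    · intro h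
      rw [c1, c2] at h
      rw [e1, conj1, hψ2 z]
      linear_combination (Real.exp (-(μ₂ * x2 z)) : ℂ) * h
    · intro h
      rw [e1, conj1, hψ2 z] at h
      rw [c1, c2]
      refine mul_left_cancel₀ hE1 ?_
      linear_combination h
  · constructor
    · intro h
      rw [c0, c1, hex0, hex1] at h
      rw [hψ2', habs0, habs1]
      linear_combination h
    · intro h
      rw [hψ2', habs0, habs1] at h
      rw [c0, c1, hex0, hex1]
      linear_combination h
end

section
/- Let μ₁, μ₂ be real constants, U ⊆ ℂ open, and f, g : U → ℂ smooth functions satisfying f_z̄ = −i·|f|²·(μ₁|g|² − (μ₂/2)(1 + ḡ²)) and g_z̄ = (i/2)·f̄·(μ₁·ḡ·(1+g²) − μ₂·g·(1+ḡ²)) on U. Suppose that at every point of U both μ₁·g·(1+ḡ²) − μ₂·ḡ·(1+g²) ≠ 0 and μ₁·ḡ·(1+g²) − μ₂·g·(1+ḡ²) ≠ 0. Then g satisfies on U the second-order equation: g_{zz̄} − [(μ₁² − μ₂²)·g·(1+g²)·(1−ḡ²)·|g_z̄|²] / ([μ₁·g·(1+ḡ²) − μ₂·ḡ·(1+g²)]·[μ₁·ḡ·(1+g²)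 − μ₂·g·(1+ḡ²)]) − [(2μ₁|g|² − μ₂(1+ḡ²)) / (μ₁·ḡ·(1+g²) − μ₂·g·(1+ḡ²))]·g_z·g_z̄ = 0. -/
open Complex

section WirtingerToolkit
variable {φ ψ : ℂ → ℂ} {z : ℂ}

lemma wirtZ_congr_nhds (h : φ =ᶠ[nhds z] ψ) : wirtZ φ z = wirtZ ψ z := by
  unfold wirtZ; rw [h.fderiv_eq]

lemma wirtZ_mul (hφ : DifferentiableAt ℝ φ z) (hψ : DifferentiableAt ℝ ψ z) :
    wirtZ (fun w => φ w * ψ w) z = wirtZ φ z * ψ z + φ z * wirtZ ψ z := by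
  unfold wirtZ
  rw [fderiv_fun_mul hφ hψ]
  simp only [ContinuousLinearMap.add_apply, ContinuousLinearMap.smul_apply, smul_eq_mul]
  ring

lemma wirtZ_sub (hφ : DifferentiableAt ℝ φ z) (hψ : DifferentiableAt ℝ ψ z) :
    wirtZ (fun w => φ w - ψ w) z = wirtZ φ z - wirtZ ψ z := by
  unfold wirtZ
  rw [fderiv_fun_sub hφ hψ]
  simp only [ContinuousLinearMap.sub_apply]
  ring

lemma wirtZ_const_mul (c : ℂ) (hφ : DifferentiableAt ℝ φ z) :
    wirtZ (fun w => c * φ w) z = c * wirtZ φ z := by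
  rw [wirtZ_mul (differentiableAt_const c) hφ]
  simp [wirtZ, fderiv_const]

lemma wirtZ_one_add_sq (hφ : DifferentiableAt ℝ φ z) :
    wirtZ (fun w => 1 + φ w ^ 2) z = 2 * φ z * wirtZ φ z := by
  have h : (fun w => 1 + φ w ^ 2) = fun w => φ w * φ w - (-1) := by
    funext w; ring
  rw [h, wirtZ_sub (φ := fun w => φ w * φ w) (hφ.mul hφ) (differentiableAt_const _), wirtZ_mul hφ hφ]
  simp [wirtZ, fderiv_fun_const]
  ring

lemma fderiv_conj_comp (hφ : DifferentiableAt ℝ φ z) (v : ℂ) :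
    fderiv ℝ (fun w => (starRingEnd ℂ) (φ w)) z v = (starRingEnd ℂ) (fderiv ℝ φ z v) := by
  have h : (fun w => (starRingEnd ℂ) (φ w)) = (Complex.conjCLE : ℂ → ℂ) ∘ φ := rfl
  rw [h, Complex.conjCLE.comp_fderiv]
  simp

lemma wirtZ_conj (hφ : DifferentiableAt ℝ φ z) :
    wirtZ (fun w => (starRingEnd ℂ) (φ w)) z = (starRingEnd ℂ) (wirtZBar φ z) := by
  unfold wirtZ wirtZBar
  rw [fderiv_conj_comp hφ 1, fderiv_conj_comp hφ Complex.I]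
  simp only [map_div₀, map_add, map_mul, Complex.conj_I, map_ofNat]
  ring

lemma diff_conj_comp (hφ : DifferentiableAt ℝ φ z) :
    DifferentiableAt ℝ (fun w => (starRingEnd ℂ) (φ w)) z := by
  have h : (fun w => (starRingEnd ℂ) (φ w)) = (Complex.conjCLE : ℂ → ℂ) ∘ φ := rfl
  rw [h]
  exact Complex.conjCLE.differentiableAt.comp z hφ

lemma wirt_comm {g : ℂ → ℂ} (h : ContDiffAt ℝ (⊤ : ℕ∞) g z) :
    wirtZBar (wirtZ g) z = wirtZ (wirtZBar g) z := by
  have hsymm : IsSymmSndFDerivAt ℝ g z := h.isSymmSndFDerivAt (by rw [minSmoothness_of_isRCLikeNormedField]; exact WithTop.coe_le_coe.mpr (le_top : (2 : ℕ∞) ≤ ⊤))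
  have hd : DifferentiableAt ℝ (fderiv ℝ g) z :=
    (h.fderiv_right (m := (⊤ : ℕ∞)) (by simp)).differentiableAt (by simp)
  have key : ∀ u v : ℂ, fderiv ℝ (fun w => fderiv ℝ g w u) z v
      = fderiv ℝ (fderiv ℝ g) z v u := by
    intro u v
    rw [fderiv_clm_apply hd (differentiableAt_const u)]
    simp
  have dWu : ∀ u : ℂ, DifferentiableAt ℝ (fun w => fderiv ℝ g w u) z := fun u =>
    hd.clm_apply (differentiableAt_const u)
  have e1 : wirtZ g = fun w => ((fun w => fderiv ℝ g w 1) w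
      - Complex.I * (fun w => fderiv ℝ g w Complex.I) w) / 2 := rfl
  have e2 : wirtZBar g = fun w => ((fun w => fderiv ℝ g w 1) w
      + Complex.I * (fun w => fderiv ℝ g w Complex.I) w) / 2 := rfl
  have fd1 : ∀ v : ℂ, fderiv ℝ (wirtZ g) z v
      = (fderiv ℝ (fderiv ℝ g) z v 1 - Complex.I * fderiv ℝ (fderiv ℝ g) z v Complex.I) / 2 := by
    intro v
    rw [e1]
    have : (fun w => ((fun w => fderiv ℝ g w 1) w
        - Complex.I * (fun w => fderiv ℝ g w Complex.I) w) / 2)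
        = fun w => (2:ℂ)⁻¹ * ((fun w => fderiv ℝ g w 1) w
          - Complex.I * (fun w => fderiv ℝ g w Complex.I) w) := by
      funext w; ring
    rw [this, fderiv_const_mul (by exact (dWu 1).sub ((dWu Complex.I).const_mul _)),
      fderiv_fun_sub (dWu 1) ((dWu Complex.I).const_mul _),
      fderiv_const_mul (dWu Complex.I)]
    simp only [ContinuousLinearMap.smul_apply, ContinuousLinearMap.sub_apply, smul_eq_mul,
      key]
    ring
  have fd2 : ∀ v : ℂ, fderiv ℝ (wirtZBar g) z v
      = (fderiv ℝ (fderiv ℝ g) z v 1 + Complex.I * fderiv ℝ (fderiv ℝ g) z v Complex.I) / 2 := by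
    intro v
    rw [e2]
    have : (fun w => ((fun w => fderiv ℝ g w 1) w
        + Complex.I * (fun w => fderiv ℝ g w Complex.I) w) / 2)
        = fun w => (2:ℂ)⁻¹ * ((fun w => fderiv ℝ g w 1) w
          + Complex.I * (fun w => fderiv ℝ g w Complex.I) w) := by
      funext w; ring
    rw [this, fderiv_const_mul (by exact (dWu 1).add ((dWu Complex.I).const_mul _)),
      fderiv_fun_add (dWu 1) ((dWu Complex.I).const_mul _),
      fderiv_const_mul (dWu Complex.I)]
    simp only [ContinuousLinearMap.smul_apply, ContinuousLinearMap.add_apply, smul_eq_mul,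
      key]
    ring
  have hs := hsymm.eq 1 Complex.I
  have l1 : wirtZBar (wirtZ g) z
      = (fderiv ℝ (wirtZ g) z 1 + Complex.I * fderiv ℝ (wirtZ g) z Complex.I) / 2 := rfl
  have l2 : wirtZ (wirtZBar g) z
      = (fderiv ℝ (wirtZBar g) z 1 - Complex.I * fderiv ℝ (wirtZBar g) z Complex.I) / 2 := rfl
  rw [l1, l2, fd1 1, fd1 Complex.I, fd2 1, fd2 Complex.I, hs]
  ring

end WirtingerToolkit

/-- If the Weierstrass data `(f,g)` satisfy the structure equations, then the
projected normal Gauss map `g` satisfies the second-order equation (harm4). -/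
theorem projected_gauss_map_harm4 (μ₁ μ₂ : ℝ) (U : Set ℂ) (hU : IsOpen U)
    (f g : ℂ → ℂ) (hf : ContDiffOn ℝ (⊤ : ℕ∞) f U) (hg : ContDiffOn ℝ (⊤ : ℕ∞) g U)
    (heqf : ∀ z ∈ U,
      wirtZBar f z = -Complex.I * (‖f z‖ : ℂ) ^ 2 *
        ((μ₁ : ℂ) * (‖g z‖ : ℂ) ^ 2
          - ((μ₂ : ℂ) / 2) * (1 + (starRingEnd ℂ) (g z) ^ 2)))
    (heqg : ∀ z ∈ U,
      wirtZBar g z = (Complex.I / 2) * (starRingEnd ℂ) (f z) *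
        ((μ₁ : ℂ) * (starRingEnd ℂ) (g z) * (1 + g z ^ 2)
          - (μ₂ : ℂ) * g z * (1 + (starRingEnd ℂ) (g z) ^ 2)))
    (hden1 : ∀ z ∈ U,
      (μ₁ : ℂ) * g z * (1 + (starRingEnd ℂ) (g z) ^ 2)
        - (μ₂ : ℂ) * (starRingEnd ℂ) (g z) * (1 + g z ^ 2) ≠ 0)
    (hden2 : ∀ z ∈ U,
      (μ₁ : ℂ) * (starRingEnd ℂ) (g z) * (1 + g z ^ 2)
        - (μ₂ : ℂ) * g z * (1 + (starRingEnd ℂ) (g z) ^ 2) ≠ 0) :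
    ∀ z ∈ U,
      wirtZBar (wirtZ g) z
        - (((μ₁ : ℂ) ^ 2 - (μ₂ : ℂ) ^ 2) * g z * (1 + g z ^ 2)
              * (1 - (starRingEnd ℂ) (g z) ^ 2) * (‖wirtZBar g z‖ : ℂ) ^ 2) /
            (((μ₁ : ℂ) * g z * (1 + (starRingEnd ℂ) (g z) ^ 2)
                - (μ₂ : ℂ) * (starRingEnd ℂ) (g z) * (1 + g z ^ 2))
              * ((μ₁ : ℂ) * (starRingEnd ℂ) (g z) * (1 + g z ^ 2)
                - (μ₂ : ℂ) * g z * (1 + (starRingEnd ℂ) (g z) ^ 2)))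
        - ((2 * (μ₁ : ℂ) * (‖g z‖ : ℂ) ^ 2
              - (μ₂ : ℂ) * (1 + (starRingEnd ℂ) (g z) ^ 2)) /
            ((μ₁ : ℂ) * (starRingEnd ℂ) (g z) * (1 + g z ^ 2)
              - (μ₂ : ℂ) * g z * (1 + (starRingEnd ℂ) (g z) ^ 2)))
          * wirtZ g z * wirtZBar g z = 0 := by
  intro z hz
  have hnz : U ∈ nhds z := hU.mem_nhds hz
  have hgz : ContDiffAt ℝ (⊤ : ℕ∞) g z := hg.contDiffAt hnz
  have hfz : ContDiffAt ℝ (⊤ : ℕ∞) f z := hf.contDiffAt hnz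
  have dg : DifferentiableAt ℝ g z := hgz.differentiableAt (by simp)
  have df : DifferentiableAt ℝ f z := hfz.differentiableAt (by simp)
  have dcg : DifferentiableAt ℝ (fun w => (starRingEnd ℂ) (g w)) z := diff_conj_comp dg
  have dcf : DifferentiableAt ℝ (fun w => (starRingEnd ℂ) (f w)) z := diff_conj_comp df
  -- abbreviations for the pieces of F
  have d1 : DifferentiableAt ℝ (fun w => Complex.I / 2 * (starRingEnd ℂ) (f w)) z :=
    dcf.const_mul _
  have dsq1 : DifferentiableAt ℝ (fun w => 1 + g w ^ 2) z :=
    (differentiableAt_const 1).add (dg.pow 2)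
  have dsq2 : DifferentiableAt ℝ (fun w => 1 + (starRingEnd ℂ) (g w) ^ 2) z :=
    (differentiableAt_const 1).add (dcg.pow 2)
  have dE1 : DifferentiableAt ℝ (fun w => (starRingEnd ℂ) (g w) * (1 + g w ^ 2)) z :=
    dcg.mul dsq1
  have dE2 : DifferentiableAt ℝ (fun w => g w * (1 + (starRingEnd ℂ) (g w) ^ 2)) z :=
    dg.mul dsq2
  have dE : DifferentiableAt ℝ (fun w =>
      (μ₁ : ℂ) * ((starRingEnd ℂ) (g w) * (1 + g w ^ 2))
        - (μ₂ : ℂ) * (g w * (1 + (starRingEnd ℂ) (g w) ^ 2))) z :=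
    (dE1.const_mul _).sub (dE2.const_mul _)
  -- step 1: commute the mixed Wirtinger derivatives
  have hcomm : wirtZBar (wirtZ g) z = wirtZ (wirtZBar g) z := wirt_comm hgz
  -- step 2: replace wirtZBar g by the structure-equation RHS near z
  have hF : wirtZBar g =ᶠ[nhds z] fun w =>
      (Complex.I / 2 * (starRingEnd ℂ) (f w)) *
        ((μ₁ : ℂ) * ((starRingEnd ℂ) (g w) * (1 + g w ^ 2))
          - (μ₂ : ℂ) * (g w * (1 + (starRingEnd ℂ) (g w) ^ 2))) := by
    filter_upwards [hnz] with w hw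
    rw [heqg w hw]; ring
  have h2 := wirtZ_congr_nhds hF
  -- step 3: compute wirtZ F z by Leibniz rules
  have h3 : wirtZ (fun w =>
      (Complex.I / 2 * (starRingEnd ℂ) (f w)) *
        ((μ₁ : ℂ) * ((starRingEnd ℂ) (g w) * (1 + g w ^ 2))
          - (μ₂ : ℂ) * (g w * (1 + (starRingEnd ℂ) (g w) ^ 2)))) z
      = (Complex.I / 2 * (starRingEnd ℂ) (wirtZBar f z)) *
          ((μ₁ : ℂ) * ((starRingEnd ℂ) (g z) * (1 + g z ^ 2))
            - (μ₂ : ℂ) * (g z * (1 + (starRingEnd ℂ) (g z) ^ 2)))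
        + (Complex.I / 2 * (starRingEnd ℂ) (f z)) *
          ((μ₁ : ℂ) * ((starRingEnd ℂ) (wirtZBar g z) * (1 + g z ^ 2)
              + (starRingEnd ℂ) (g z) * (2 * g z * wirtZ g z))
            - (μ₂ : ℂ) * (wirtZ g z * (1 + (starRingEnd ℂ) (g z) ^ 2)
              + g z * (2 * (starRingEnd ℂ) (g z) * (starRingEnd ℂ) (wirtZBar g z)))) := by
    rw [wirtZ_mul d1 dE, wirtZ_const_mul _ dcf, wirtZ_conj df,
      wirtZ_sub (dE1.const_mul _) (dE2.const_mul _),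
      wirtZ_const_mul _ dE1, wirtZ_const_mul _ dE2,
      wirtZ_mul dcg dsq1, wirtZ_mul dg dsq2,
      wirtZ_conj dg, wirtZ_one_add_sq dg, wirtZ_one_add_sq dcg, wirtZ_conj dg]
  -- abs squared rewrites
  have habsf : ((‖f z‖) : ℂ) ^ 2 = f z * (starRingEnd ℂ) (f z) := by
    rw [Complex.mul_conj, ← Complex.sq_norm]; norm_cast
  have habsg : ((‖g z‖) : ℂ) ^ 2 = g z * (starRingEnd ℂ) (g z) := by
    rw [Complex.mul_conj, ← Complex.sq_norm]; norm_cast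
  have habsw : ((‖wirtZBar g z‖) : ℂ) ^ 2
      = wirtZBar g z * (starRingEnd ℂ) (wirtZBar g z) := by
    rw [Complex.mul_conj, ← Complex.sq_norm]; norm_cast
  -- final algebra
  rw [hcomm, h2, h3, habsw, habsg, heqg z hz, heqf z hz, habsf, habsg]
  simp only [map_mul, map_sub, map_add, map_div₀, map_one, map_neg, map_pow,
    Complex.conj_I, Complex.conj_conj, Complex.conj_ofReal, map_ofNat]
  have h1' : (μ₁ : ℂ) * g z * (1 + (starRingEnd ℂ) (g z) ^ 2) - (starRingEnd ℂ) (g z) * (μ₂ : ℂ) * (1 + g z ^ 2) ≠ 0 := by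
    convert hden1 z hz using 2; ring
  have h2' : (μ₁ : ℂ) * (starRingEnd ℂ) (g z) * (1 + g z ^ 2) - g z * (μ₂ : ℂ) * (1 + (starRingEnd ℂ) (g z) ^ 2) ≠ 0 := by
    convert hden2 z hz using 2; ring
  field_simp [hden1 z hz, hden2 z hz]
  ring
end

section
/- Let c ≠ 0 be a real number, D ⊆ ℂ a connected open set, and f, g : D → ℂ smooth functions with f nonvanishing on D, satisfying g_z̄ = (i·c/2)·f̄·(ḡ − g)·(1 − |g|²) on D (the equation for the projected normal Gauss map of a maximal spacelike surface in anti-de Sitter 3-space). If g is holomorphic on D (i.e., g_z̄ = 0 on D) and the induced conformal factor |f|²(1 − |g|²)² is nonvanishing on D, then g is a constant real-valued function on D. (Consequently, the projected normal Gauss map of a maximal spacelike surface in anti-de Sitter 3-space H³₁(−c²)₊ cannot be holomorphic.) -/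
open Complex

/-- If the projected normal Gauss map `g` of a maximal spacelike surface in anti-de
Sitter 3-space (satisfying `g_z̄ = (ic/2)f̄(ḡ−g)(1−|g|²)` with nondegenerate induced
metric `|f|²(1−|g|²)²`) is holomorphic, then `g` is a real constant; hence the
projected normal Gauss map cannot be holomorphic (for a genuine immersion). -/
theorem ads_gauss_map_not_holomorphic (c : ℝ) (hc : c ≠ 0) (D : Set ℂ)
    (hD : IsOpen D) (hconn : IsConnected D)
    (f g : ℂ → ℂ) (hf : ContDiffOn ℝ (⊤ : ℕ∞) f D) (hg : ContDiffOn ℝ (⊤ : ℕ∞) g D)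
    (hf0 : ∀ z ∈ D, f z ≠ 0)
    (heq : ∀ z ∈ D,
      wirtZBar g z = (Complex.I * (c : ℂ) / 2) * (starRingEnd ℂ) (f z) *
        ((starRingEnd ℂ) (g z) - g z) * (1 - (‖g z‖ : ℂ) ^ 2))
    (hhol : ∀ z ∈ D, wirtZBar g z = 0)
    (hconf : ∀ z ∈ D,
      ‖f z‖ ^ 2 * (1 - ‖g z‖ ^ 2) ^ 2 ≠ 0) :
    ∃ r : ℝ, ∀ z ∈ D, g z = (r : ℂ) := by
  -- Step A: g is real-valued on D
  have hreal : ∀ z ∈ D, (starRingEnd ℂ) (g z) = g z := by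
    intro z hz
    have h1 := heq z hz
    rw [hhol z hz] at h1
    have habs : (1 : ℝ) - ‖g z‖ ^ 2 ≠ 0 := by
      intro h0
      exact hconf z hz (by rw [h0]; ring)
    have habsC : (1 : ℂ) - ((‖g z‖ : ℂ)) ^ 2 ≠ 0 := by
      have h2 : ((1 - ‖g z‖ ^ 2 : ℝ) : ℂ) ≠ 0 := Complex.ofReal_ne_zero.mpr habs
      push_cast at h2
      exact h2
    have hI : (Complex.I * (c : ℂ) / 2) ≠ 0 := by
      simp [Complex.I_ne_zero, hc, Complex.ofReal_ne_zero]
    have hfc : (starRingEnd ℂ) (f z) ≠ 0 := by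
      simpa using hf0 z hz
    have hprod : (starRingEnd ℂ) (g z) - g z = 0 := by
      rcases mul_eq_zero.mp h1.symm with h | h
      · rcases mul_eq_zero.mp h with h | h
        · rcases mul_eq_zero.mp h with h | h
          · exact absurd h hI
          · exact absurd h hfc
        · exact h
      · exact absurd h habsC
    exact sub_eq_zero.mp hprod
  -- differentiability
  have hdiff : ∀ z ∈ D, DifferentiableAt ℝ g z := by
    intro z hz
    exact (hg.contDiffAt (hD.mem_nhds hz)).differentiableAt (by simp)
  -- Step B: fderiv g = 0 on D
  have hfd : ∀ z ∈ D, fderiv ℝ g z = 0 := by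
    intro z hz
    set L := fderiv ℝ g z with hL
    have hev : (fun w => (starRingEnd ℂ) (g w)) =ᶠ[nhds z] g := by
      filter_upwards [hD.mem_nhds hz] with w hw using hreal w hw
    have hcomp : fderiv ℝ (fun w => (starRingEnd ℂ) (g w)) z =
        (Complex.conjCLE : ℂ →L[ℝ] ℂ).comp L :=
      (Complex.conjCLE.hasFDerivAt.comp z (hdiff z hz).hasFDerivAt).fderiv
    have hLv : ∀ v : ℂ, (starRingEnd ℂ) (L v) = L v := by
      intro v
      have h2 : fderiv ℝ (fun w => (starRingEnd ℂ) (g w)) z = L := hev.fderiv_eq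
      have h3 := congrArg (fun (M : ℂ →L[ℝ] ℂ) => M v) (hcomp.symm.trans h2)
      simpa using h3
    have him1 : (L 1).im = 0 := Complex.conj_eq_iff_im.mp (hLv 1)
    have himI : (L Complex.I).im = 0 := Complex.conj_eq_iff_im.mp (hLv Complex.I)
    have hzero : L 1 + Complex.I * L Complex.I = 0 := by
      have h4 := hhol z hz
      unfold wirtZBar at h4
      field_simp at h4
      rw [mul_zero] at h4
      exact h4
    have hre1 : (L 1).re - (L Complex.I).im = 0 := by
      have := congrArg Complex.re hzero; simp at this; linarith
    have hre2 : (L 1).im + (L Complex.I).re = 0 := by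
      have := congrArg Complex.im hzero; simpa using this
    have hL1 : L 1 = 0 := by
      apply Complex.ext
      · simp only [Complex.zero_re]; linarith
      · simp [him1]
    have hLI : L Complex.I = 0 := by
      apply Complex.ext
      · simp only [Complex.zero_re]; linarith
      · simp [himI]
    ext v
    have hv : v = (v.re : ℝ) • (1 : ℂ) + (v.im : ℝ) • Complex.I := by
      simpa [Complex.real_smul] using (Complex.re_add_im v).symm
    calc L v = (v.re : ℝ) • L 1 + (v.im : ℝ) • L Complex.I := by
          rw [← L.map_smul, ← L.map_smul, ← L.map_add, ← hv]
      _ = 0 := by rw [hL1, hLI]; simp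
  -- Step C: locally constant, hence constant on connected D
  obtain ⟨z₀, hz₀⟩ := hconn.nonempty
  refine ⟨(g z₀).re, fun z hz => ?_⟩
  have hlocal : ∀ w ∈ D, ∀ x, (∃ ε > 0, Metric.ball w ε ⊆ D ∧ x ∈ Metric.ball w ε) →
      g x = g w := by
    rintro w hw x ⟨ε, hε, hsub, hxball⟩
    have hconv : Convex ℝ (Metric.ball w ε) := convex_ball w ε
    have hdiffOn : DifferentiableOn ℝ g (Metric.ball w ε) := fun y hy =>
      (hdiff y (hsub hy)).differentiableWithinAt
    have hfd' : ∀ y ∈ Metric.ball w ε, fderivWithin ℝ g (Metric.ball w ε) y = 0 := by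
      intro y hy
      rw [fderivWithin_of_isOpen Metric.isOpen_ball hy]
      exact hfd y (hsub hy)
    exact hconv.is_const_of_fderivWithin_eq_zero hdiffOn hfd' hxball
      (Metric.mem_ball_self hε)
  have hballs : ∀ w ∈ D, ∃ ε > 0, Metric.ball w ε ⊆ D := fun w hw =>
    Metric.isOpen_iff.mp hD w hw
  have hconst : g z = g z₀ := by
    set U : Set ℂ := {w | ∃ ε > 0, Metric.ball w ε ⊆ D ∧ ∀ x ∈ Metric.ball w ε, g x = g z₀}
      with hU
    set V : Set ℂ := {w ∈ D | g w ≠ g z₀} with hV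
    have hUopen : IsOpen U := by
      rw [Metric.isOpen_iff]
      rintro w ⟨ε, hε, hsub, hval⟩
      refine ⟨ε, hε, fun x hx => ?_⟩
      have hd : dist x w < ε := Metric.mem_ball.mp hx
      refine ⟨ε - dist x w, by linarith, fun y hy => hsub ?_, fun y hy => hval y ?_⟩ <;>
      · have hd2 : dist y x < ε - dist x w := Metric.mem_ball.mp hy
        rw [Metric.mem_ball]
        calc dist y w ≤ dist y x + dist x w := dist_triangle _ _ _
          _ < ε := by linarith
    have hVopen : IsOpen V := by
      have hcont : ContinuousOn g D := hg.continuousOn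
      have hVeq : V = {w ∈ D | g w ∈ ({g z₀}ᶜ : Set ℂ)} := rfl
      rw [hVeq]
      exact hcont.isOpen_inter_preimage hD isOpen_compl_singleton
    have hUV : Disjoint U V := by
      rw [Set.disjoint_left]
      rintro w ⟨ε, hε, hsub, hval⟩ ⟨hwD, hne⟩
      exact hne (hval w (Metric.mem_ball_self hε))
    have hcover : D ⊆ U ∪ V := by
      intro w hw
      by_cases hgw : g w = g z₀
      · left
        obtain ⟨ε, hε, hsub⟩ := hballs w hw
        exact ⟨ε, hε, hsub, fun x hx => by
          rw [hlocal w hw x ⟨ε, hε, hsub, hx⟩, hgw]⟩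
      · right; exact ⟨hw, hgw⟩
    have hUne : (D ∩ U).Nonempty := by
      obtain ⟨ε, hε, hsub⟩ := hballs z₀ hz₀
      exact ⟨z₀, hz₀, ε, hε, hsub, fun x hx => hlocal z₀ hz₀ x ⟨ε, hε, hsub, hx⟩⟩
    have hsubU := hconn.isPreconnected.subset_left_of_subset_union hUopen hVopen hUV hcover hUne
    obtain ⟨ε, hε, hsub, hval⟩ := hsubU hz
    exact hval z (Metric.mem_ball_self hε)
  rw [hconst]
  exact (Complex.conj_eq_iff_re.mp (hreal z₀ hz₀)).symm
end
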